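/- Let L be a Dirac structure in the H-twisted Courant algebroid TM ⊕ T*M and ∇^K an affine connection on M. Define φ^{KL}(a,b) = ρ_{T*}([a,b]) + ∇^K_{ρ(b)}(ρ_{T*}(a)) − ∇^K_{ρ(a)}(ρ_{T*}(b)) for sections a, b of L, where [a,b] is the restricted Dorfman bracket on L. Then φ^{KL} is C^∞(M)-bilinear and antisymmetric, defining a tensor φ^{KL} ∈ Γ(Λ²L* ⊗ T*M). -/

import Mathlib

open scoped BigOperators

noncomputable section CourantModel

variable {A : Type*} [CommRing A] [Algebra ℝ A]

abbrev Vec (A : Type*) [CommRing A] [Algebra ℝ A] := Derivation ℝ A A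

abbrev GT (A : Type*) [CommRing A] [Algebra ℝ A] := Vec A × (Vec A → A)

/-- A (smooth) one-form in the algebraic model: an `A`-linear functional on vector fields. -/
def IsOneForm (ξ : Vec A → A) : Prop :=
  (∀ X Y, ξ (X + Y) = ξ X + ξ Y) ∧ ∀ (f : A) (X : Vec A), ξ (f • X) = f * ξ X

/-- The differential of a function. -/
def dfun (f : A) : Vec A → A := fun X => X f

/-- Lie derivative of a one-form. -/
def lieD (X : Vec A) (ν : Vec A → A) : Vec A → A := fun Y => X (ν Y) - ν ⁅X, Y⁆

/-- Exterior derivative of a one-form (as a two-form). -/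
def dext (ξ : Vec A → A) : Vec A → Vec A → A :=
  fun Y Z => Y (ξ Z) - Z (ξ Y) - ξ ⁅Y, Z⁆

/-- A three-form: alternating and `A`-multilinear. -/
def IsThreeForm (H : Vec A → Vec A → Vec A → A) : Prop :=
  (∀ X Y Z, H X Y Z = - H Y X Z) ∧ (∀ X Y Z, H X Y Z = - H X Z Y) ∧
  (∀ (f : A) (X Y Z : Vec A), H (f • X) Y Z = f * H X Y Z) ∧
  (∀ X X' Y Z, H (X + X') Y Z = H X Y Z + H X' Y Z)

/-- The canonical symmetric pairing `⟨X+ξ, Y+ν⟩ = ν(X) + ξ(Y)`. -/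
def pair (a b : GT A) : A := b.2 a.1 + a.2 b.1

/-- The anchor `ρ(X+ξ) = X`. -/
def anchor (a : GT A) : Vec A := a.1

/-- The `H`-twisted Dorfman bracket
`[[X+ξ, Y+ν]] = [X,Y] + L_X ν − ι_Y dξ + ι_Y ι_X H`. -/
def dorf (H : Vec A → Vec A → Vec A → A) (a b : GT A) : GT A :=
  (⁅a.1, b.1⁆, fun Z => lieD a.1 b.2 Z - dext a.2 b.1 Z + H a.1 b.1 Z)

/-- The skew-symmetrised (Courant) bracket `[[a,b]]_sk = ½([[a,b]] − [[b,a]])`. -/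
def skewBr (H : Vec A → Vec A → Vec A → A) (a b : GT A) : GT A :=
  (1/2 : ℝ) • (dorf H a b - dorf H b a)

end CourantModel

noncomputable section

variable {A : Type*} [CommRing A] [Algebra ℝ A]

/-- The connection on `T*M` induced by an affine connection `K` on `M`:
`(∇^K_X ξ)(Z) = X(ξ Z) − ξ(∇^K_X Z)`. -/
def coK (K : Vec A → Vec A → Vec A) (X : Vec A) (ξ : Vec A → A) : Vec A → A :=
  fun Z => X (ξ Z) - ξ (K X Z)

/-- `φ^{KL}(a,b) = ρ_{T*}([[a,b]]) + ∇^K_{ρ(b)}(ρ_{T*}(a)) − ∇^K_{ρ(a)}(ρ_{T*}(b))`. -/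
def phiKL (H : Vec A → Vec A → Vec A → A) (K : Vec A → Vec A → Vec A)
    (a b : GT A) : Vec A → A :=
  fun Z => (dorf H a b).2 Z + coK K b.1 a.2 Z - coK K a.1 b.2 Z

/-!
The symmetric part of `φ^{KL}(a, b)` is `d⟨a, b⟩`, and `φ^{KL}(f a, b) − f φ^{KL}(a, b)` is
`df ⊗ ⟨a, b⟩`; both vanish on an isotropic `L`. Linearity in the second argument then follows
from skew-symmetry, as `f • b` stays in `L`.
-/

lemma Derivation.commutator_smul_left (f : A) (X Z : Vec A) :
    ⁅f • X, Z⁆ = f • ⁅X, Z⁆ - (Z f) • X := by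
  ext g
  simp only [Derivation.commutator_apply, Derivation.sub_apply, Derivation.smul_apply,
    smul_eq_mul, Derivation.leibniz]
  ring

lemma IsOneForm.map_sub {ξ : Vec A → A} (hξ : IsOneForm ξ) (X Y : Vec A) :
    ξ (X - Y) = ξ X - ξ Y := by
  have hneg : ξ (-Y) = -ξ Y := by simpa using hξ.2 (-1) Y
  rw [sub_eq_add_neg, hξ.1, hneg, sub_eq_add_neg]

lemma phiKL_apply (H : Vec A → Vec A → Vec A → A) (K : Vec A → Vec A → Vec A)
    (a b : GT A) (Z : Vec A) :
    phiKL H K a b Z =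
      Z (a.2 b.1) + a.2 ⁅b.1, Z⁆ - a.2 (K b.1 Z) + b.2 (K a.1 Z)
        - b.2 ⁅a.1, Z⁆ + H a.1 b.1 Z := by
  simp only [phiKL, dorf, coK, lieD, dext]
  ring

lemma phiKL_add_phiKL_swap (H : Vec A → Vec A → Vec A → A)
    (hH : ∀ X Y Z, H X Y Z = -H Y X Z) (K : Vec A → Vec A → Vec A) (a b : GT A) (Z : Vec A) :
    phiKL H K a b Z + phiKL H K b a Z = Z (pair a b) := by
  rw [phiKL_apply, phiKL_apply, pair, map_add, hH b.1 a.1 Z]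
  ring

lemma phiKL_smul_left (H : Vec A → Vec A → Vec A → A)
    (hH : ∀ (f : A) (X Y Z : Vec A), H (f • X) Y Z = f * H X Y Z)
    (K : Vec A → Vec A → Vec A) (hK : ∀ (f : A) (X Y : Vec A), K (f • X) Y = f • K X Y)
    (a b : GT A) (hb : IsOneForm b.2) (f : A) (Z : Vec A) :
    phiKL H K (f • a) b Z = f * phiKL H K a b Z + Z f * pair a b := by
  have hfa₁ : (f • a).1 = f • a.1 := rfl
  have hfa₂ : ∀ X, (f • a).2 X = f * a.2 X := fun _ => rfl
  rw [phiKL_apply, phiKL_apply, hfa₁, hfa₂, hfa₂, hfa₂, hK, Derivation.commutator_smul_left,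
    hb.map_sub, hb.2, hb.2, hb.2, Derivation.leibniz, hH, smul_eq_mul, smul_eq_mul, pair]
  ring

theorem phiKL_is_tensorial_general
    (H : Vec A → Vec A → Vec A → A) (hH : IsThreeForm H)
    (L : Submodule A (GT A))
    (hiso : ∀ a ∈ L, ∀ b ∈ L, pair a b = 0)
    (hform : ∀ a ∈ L, IsOneForm a.2)
    (K : Vec A → Vec A → Vec A)
    (hKf1 : ∀ (f : A) (X Y : Vec A), K (f • X) Y = f • K X Y) :
    ∀ a ∈ L, ∀ b ∈ L,
      (phiKL H K a b = fun Z => - phiKL H K b a Z) ∧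
      (∀ f : A,
        phiKL H K (f • a) b = (fun Z => f * phiKL H K a b Z) ∧
        phiKL H K a (f • b) = (fun Z => f * phiKL H K a b Z)) := by
  have skew : ∀ a ∈ L, ∀ b ∈ L, ∀ Z, phiKL H K a b Z = -phiKL H K b a Z := fun a ha b hb Z => by
    rw [eq_neg_iff_add_eq_zero, phiKL_add_phiKL_swap H hH.1, hiso a ha b hb, map_zero]
  have smul_left : ∀ a ∈ L, ∀ b ∈ L, ∀ (f : A) Z,
      phiKL H K (f • a) b Z = f * phiKL H K a b Z := fun a ha b hb f Z => by
    rw [phiKL_smul_left H hH.2.2.1 K hKf1 a b (hform b hb), hiso a ha b hb, mul_zero, add_zero]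
  intro a ha b hb
  refine ⟨funext (skew a ha b hb), fun f => ⟨funext (smul_left a ha b hb f), funext fun Z => ?_⟩⟩
  rw [skew a ha _ (L.smul_mem f hb), smul_left b hb a ha, skew b hb a ha, mul_neg, neg_neg]

/-- Let `L` be a Dirac structure in the `H`-twisted Courant algebroid
`TM ⊕ T*M` and `∇^K` an affine connection on `M`.  Then
`φ^{KL}(a,b) = ρ_{T*}([a,b]) + ∇^K_{ρ(b)}(ρ_{T*}(a)) − ∇^K_{ρ(a)}(ρ_{T*}(b))` is
antisymmetric and `C^∞(M)`-bilinear on sections of `L`, defining a tensor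
`φ^{KL} ∈ Γ(Λ²L* ⊗ T*M)`. -/
theorem phiKL_is_tensorial
    (H : Vec A → Vec A → Vec A → A) (hH : IsThreeForm H)
    (L : Submodule A (GT A))
    (hiso : ∀ a ∈ L, ∀ b ∈ L, pair a b = 0)
    (hform : ∀ a ∈ L, IsOneForm a.2)
    (hclosed : ∀ a ∈ L, ∀ b ∈ L, dorf H a b ∈ L)
    (K : Vec A → Vec A → Vec A)
    (hK1 : ∀ X Y Z : Vec A, K (X + Y) Z = K X Z + K Y Z)
    (hK2 : ∀ X Y Z : Vec A, K X (Y + Z) = K X Y + K X Z)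
    (hKf1 : ∀ (f : A) (X Y : Vec A), K (f • X) Y = f • K X Y)
    (hKf2 : ∀ (X : Vec A) (f : A) (Y : Vec A), K X (f • Y) = f • K X Y + (X f) • Y) :
    ∀ a ∈ L, ∀ b ∈ L,
      (phiKL H K a b = fun Z => - phiKL H K b a Z) ∧
      (∀ f : A,
        phiKL H K (f • a) b = (fun Z => f * phiKL H K a b Z) ∧
        phiKL H K a (f • b) = (fun Z => f * phiKL H K a b Z)) :=
  phiKL_is_tensorial_general H hH L hiso hform K hKf1

end
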